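/- arXiv:2510.07500 — 4 statements merged into one kernel-verified Lean document; each statement's English description precedes it below -/
import Mathlib

section
/- For every real α > 0 and every real p with 0 < p ≤ 1, it holds that p · max{1, log(1/p)} · e^{−αp} ≤ (2 + log(1+α)) / (e·α), where log denotes the natural logarithm and e is Euler's number. -/
/-!
Put `t = α p`. Both `t e^{-t}` and `-t log t · e^{-t}` are at most `1/e`, and
`log (1/p) = log α - log t` with `log α ≤ log (1 + α)`; hence
`t · max 1 (log (1/p)) · e^{-t} ≤ (2 + log (1 + α)) / e`, which is the claim multiplied by `α`.
-/

open Real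

lemma Real.negMulLog_le_exp_neg_one {x : ℝ} (hx : 0 ≤ x) : negMulLog x ≤ exp (-1) := by
  rcases hx.eq_or_lt with rfl | hx
  · simpa using (exp_pos (-1)).le
  have h : -log x ≤ x⁻¹ * exp (-1) := by
    simpa [exp_sub, exp_neg, exp_log hx, div_eq_mul_inv] using add_one_le_exp (-log x - 1)
  calc negMulLog x = x * -log x := by rw [negMulLog]; ring
    _ ≤ x * (x⁻¹ * exp (-1)) := by gcongr
    _ = exp (-1) := by field_simp

lemma Real.negMulLog_mul_exp_neg_le {x : ℝ} (hx : 0 ≤ x) :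
    negMulLog x * exp (-x) ≤ exp (-1) := by
  rcases le_total (negMulLog x) 0 with h | h
  · exact (mul_nonpos_of_nonpos_of_nonneg h (exp_pos _).le).trans (exp_pos _).le
  · calc negMulLog x * exp (-x) ≤ negMulLog x * 1 := by
          gcongr; exact exp_le_one_iff.mpr (by linarith)
      _ ≤ exp (-1) := by simpa using negMulLog_le_exp_neg_one hx

lemma mul_max_one_log_mul_exp_neg_le {α p : ℝ} (hα : 0 < α) (hp : 0 < p) :
    α * p * max 1 (log (1 / p)) * exp (-(α * p)) ≤ exp (-1) * (2 + log (1 + α)) := by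
  set t := α * p with ht
  have ht0 : 0 < t := by positivity
  have hte : t * exp (-t) ≤ exp (-1) := mul_exp_neg_le_exp_neg_one t
  have hL : 0 ≤ log (1 + α) := log_nonneg (by linarith)
  have hlog : log (1 / p) = log α - log t := by
    rw [ht, log_mul hα.ne' hp.ne', one_div, log_inv]; ring
  have hlogα : t * exp (-t) * log α ≤ exp (-1) * log (1 + α) :=
    calc t * exp (-t) * log α ≤ t * exp (-t) * log (1 + α) :=
          mul_le_mul_of_nonneg_left (log_le_log hα (by linarith)) (by positivity)
      _ ≤ exp (-1) * log (1 + α) := by gcongr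
  rw [mul_max_of_nonneg _ _ ht0.le, max_mul_of_nonneg _ _ (exp_pos _).le]
  apply max_le
  · calc t * 1 * exp (-t) = t * exp (-t) := by ring
      _ ≤ exp (-1) := hte
      _ ≤ exp (-1) * (2 + log (1 + α)) := le_mul_of_one_le_right (exp_pos _).le (by linarith)
  · have hneg := negMulLog_mul_exp_neg_le ht0.le
    have hsplit : t * (log α - log t) * exp (-t) =
        t * exp (-t) * log α + negMulLog t * exp (-t) := by
      rw [negMulLog]; ring
    rw [hlog, hsplit]
    linarith [exp_pos (-1)]

theorem uniform_bound_general (α p : ℝ) (hα : 0 < α) (hp : 0 < p) :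
    p * max 1 (Real.log (1 / p)) * Real.exp (-(α * p)) ≤
      (2 + Real.log (1 + α)) / (Real.exp 1 * α) := by
  calc p * max 1 (log (1 / p)) * exp (-(α * p))
      = α * p * max 1 (log (1 / p)) * exp (-(α * p)) / α := by field_simp
    _ ≤ exp (-1) * (2 + log (1 + α)) / α := by
        gcongr ?_ / _; exact mul_max_one_log_mul_exp_neg_le hα hp
    _ = (2 + log (1 + α)) / (exp 1 * α) := by rw [exp_neg]; field_simp

/-- **Uniform bound (Lemma A1).**
For every real `α > 0` and every real `p` with `0 < p ≤ 1`,
`p · max{1, log(1/p)} · e^{−αp} ≤ (2 + log(1+α)) / (e·α)`. -/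
theorem uniform_bound (α p : ℝ) (hα : 0 < α) (hp : 0 < p) (hp1 : p ≤ 1) :
    p * max 1 (Real.log (1 / p)) * Real.exp (-(α * p)) ≤
      (2 + Real.log (1 + α)) / (Real.exp 1 * α) :=
  uniform_bound_general α p hα hp
end

section
/- Let A be a finite set with |A| = k, let Γ > 0, and let p : A → (0,1] be any function with values in (0,1]. Then Σ_{a∈A} p(a)·max{1, log(1/p(a))}·e^{−Γ·p(a)} ≤ k·(2 + log(1+Γ)) / (e·Γ), where log denotes the natural logarithm and e is Euler's number. -/
/-!
The tangent line of the concave function `x ↦ x log (1/x)` at a point `c` gives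
`x · max 1 (log (1/x)) ≤ c + x · max 1 (log (1/c))` for all `x > 0`. Taking
`c = 1/(e(1+Γ))`, so that `log (1/c) = 1 + log (1+Γ)`, each term of the sum is at most
`c · e^{-Γx} + (1 + log (1+Γ)) · x e^{-Γx}`, and `x e^{-Γx} ≤ 1/(eΓ)` is the maximum of
`x ↦ x e^{-Γx}`.
-/

open Finset Real

lemma mul_log_one_div_le_tangent {x c : ℝ} (hx : 0 < x) (hc : 0 < c) :
    x * log (1 / x) ≤ c - x + x * log (1 / c) := by
  have hsplit : log (1 / x) = log (c / x) + log (1 / c) := by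
    rw [← log_mul (by positivity) (by positivity)]
    congr 1
    field_simp
  have hlog : x * log (c / x) ≤ x * (c / x - 1) :=
    mul_le_mul_of_nonneg_left (log_le_sub_one_of_pos (by positivity)) hx.le
  have hcx : x * (c / x - 1) = c - x := by field_simp
  rw [hsplit, mul_add]
  linarith

lemma mul_max_one_log_one_div_le {x c : ℝ} (hx : 0 < x) (hc : 0 < c) :
    x * max 1 (log (1 / x)) ≤ c + x * max 1 (log (1 / c)) := by
  have hmax : x * log (1 / c) ≤ x * max 1 (log (1 / c)) :=
    mul_le_mul_of_nonneg_left (le_max_right _ _) hx.le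
  have hone : x ≤ x * max 1 (log (1 / c)) :=
    le_mul_of_one_le_right hx.le (le_max_left _ _)
  rw [mul_max_of_nonneg _ _ hx.le, mul_one]
  exact max_le (by linarith) (by linarith [mul_log_one_div_le_tangent hx hc])

lemma mul_exp_neg_mul_le {Γ : ℝ} (hΓ : 0 < Γ) (x : ℝ) :
    x * exp (-(Γ * x)) ≤ 1 / (exp 1 * Γ) := by
  have h := mul_exp_neg_le_exp_neg_one (Γ * x)
  rw [exp_neg 1, mul_assoc, ← le_div_iff₀' hΓ] at h
  rwa [one_div, mul_inv, ← div_eq_mul_inv]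

lemma mul_max_one_log_one_div_mul_exp_le {Γ x : ℝ} (hΓ : 0 < Γ) (hx : 0 < x) :
    x * max 1 (log (1 / x)) * exp (-(Γ * x)) ≤ (2 + log (1 + Γ)) / (exp 1 * Γ) := by
  set L := log (1 + Γ)
  set c := 1 / (exp 1 * (1 + Γ))
  have hL : 0 ≤ L := log_nonneg (by linarith)
  have hlogc : max 1 (log (1 / c)) = 1 + L := by
    rw [one_div_one_div, log_mul (exp_pos 1).ne' (by positivity), log_exp]
    exact max_eq_right (by linarith)
  have hc : c ≤ 1 / (exp 1 * Γ) :=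
    one_div_le_one_div_of_le (by positivity) (by nlinarith [exp_pos 1])
  have hexp : exp (-(Γ * x)) ≤ 1 := exp_le_one_iff.mpr (by nlinarith)
  calc x * max 1 (log (1 / x)) * exp (-(Γ * x))
      ≤ (c + x * (1 + L)) * exp (-(Γ * x)) := by
        gcongr
        simpa only [hlogc] using mul_max_one_log_one_div_le hx (by positivity : 0 < c)
    _ = c * exp (-(Γ * x)) + (1 + L) * (x * exp (-(Γ * x))) := by ring
    _ ≤ c * 1 + (1 + L) * (1 / (exp 1 * Γ)) := by
        gcongr
        exact mul_exp_neg_mul_le hΓ x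
    _ ≤ (2 + L) / (exp 1 * Γ) := by
        have hsplit : (2 + L) / (exp 1 * Γ) = 1 / (exp 1 * Γ) + (1 + L) / (exp 1 * Γ) := by
          ring
        rw [mul_one, mul_one_div, hsplit]
        linarith

theorem missing_mass_row_bound_general {A : Type*} [Fintype A] (Γ : ℝ) (hΓ : 0 < Γ)
    (p : A → ℝ) (hp0 : ∀ a, 0 < p a) :
    ∑ a, p a * max 1 (Real.log (1 / p a)) * Real.exp (-(Γ * p a)) ≤
      (Fintype.card A : ℝ) * (2 + Real.log (1 + Γ)) / (Real.exp 1 * Γ) := by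
  calc ∑ a, p a * max 1 (Real.log (1 / p a)) * Real.exp (-(Γ * p a))
      ≤ Fintype.card A • ((2 + Real.log (1 + Γ)) / (Real.exp 1 * Γ)) :=
        sum_le_card_nsmul _ _ _ fun a _ => mul_max_one_log_one_div_mul_exp_le hΓ (hp0 a)
    _ = (Fintype.card A : ℝ) * (2 + Real.log (1 + Γ)) / (Real.exp 1 * Γ) := by
        rw [nsmul_eq_mul, mul_div_assoc]

/-- **Row-wise missing-mass bound.** For a finite set `A` with `|A| = k`, `Γ > 0`,
and `p : A → (0,1]`,
`Σ_{a∈A} p(a)·max{1, log(1/p(a))}·e^{−Γ·p(a)} ≤ k·(2 + log(1+Γ)) / (e·Γ)`. -/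
theorem missing_mass_row_bound {A : Type*} [Fintype A] (Γ : ℝ) (hΓ : 0 < Γ)
    (p : A → ℝ) (hp0 : ∀ a, 0 < p a) (hp1 : ∀ a, p a ≤ 1) :
    ∑ a, p a * max 1 (Real.log (1 / p a)) * Real.exp (-(Γ * p a)) ≤
      (Fintype.card A : ℝ) * (2 + Real.log (1 + Γ)) / (Real.exp 1 * Γ) :=
  missing_mass_row_bound_general Γ hΓ p hp0
end

section
/- Let A be a finite set, n ≥ 2, and let a_1, …, a_n be a sequence in A. Define the transition counts N(s,t) = #{i ∈ {1,…,n−1} : a_i = s and a_{i+1} = t} and N(s) = Σ_{t∈A} N(s,t), and let M̂ be any row-stochastic matrix with M̂(t|s) = N(s,t)/N(s) whenever N(s) > 0. Then for every row-stochastic matrix M on A (M(t|s) ≥ 0, Σ_t M(t|s) = 1 for all s): ∏_{i=1}^{n−1} M(a_{i+1}|a_i) ≤ ∏_{i=1}^{n−1} M̂(a_{i+1}|a_i), and moreover ∏_{i=1}^{n−1} M̂(a_{i+1}|a_i) = exp(−Σ_{s,t : N(s,t)>0} N(s,t)·log(N(s)/N(s,t))), with natural logarithm. -/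
/-!
Grouping the factors of the likelihood by transition turns `∏ᵢ M(aᵢ₊₁|aᵢ)` into
`∏ₛ ∏ₜ M(t|s) ^ N(s,t)`, so the maximization splits into one problem per row `s`. In a row,
weighted AM-GM with weights `N(s,t)/N(s)` at the points `M(t|s) / (N(s,t)/N(s))` bounds
`∏ₜ M(t|s) ^ N(s,t)` by `∏ₜ (N(s,t)/N(s)) ^ N(s,t)` (Gibbs' inequality), the value attained by
the empirical matrix. Writing each factor `(N(s,t)/N(s)) ^ N(s,t)` as an exponential gives the
closed form.
-/

open Finset

/-- Transition counts of a sequence `u` of length `m` (indexed `u 0, …, u (m-1)`):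
`N(s,t) = #{i ∈ {0,…,m−2} : u i = s and u (i+1) = t}`. -/
def transCount {A : Type*} [DecidableEq A] (u : ℕ → A) (m : ℕ) (s t : A) : ℕ :=
  ((Finset.range (m - 1)).filter (fun i => u i = s ∧ u (i + 1) = t)).card

/-- Row counts: `N(s) = Σ_t N(s,t)`. -/
def rowCount {A : Type*} [Fintype A] [DecidableEq A] (u : ℕ → A) (m : ℕ) (s : A) : ℕ :=
  ∑ t, transCount u m s t

theorem prod_pow_le_prod_div_sum_pow {ι : Type*} (s : Finset ι) (N : ι → ℕ) (p : ι → ℝ)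
    (hp0 : ∀ i ∈ s, 0 ≤ p i) (hp1 : ∑ i ∈ s, p i ≤ 1) :
    ∏ i ∈ s, p i ^ N i ≤ ∏ i ∈ s, ((N i : ℝ) / ∑ j ∈ s, (N j : ℝ)) ^ N i := by
  set r : ℝ := ∑ j ∈ s, (N j : ℝ)
  rcases (sum_nonneg fun j _ => Nat.cast_nonneg (N j) : 0 ≤ r).eq_or_lt with hr | hr
  · have hN : ∀ i ∈ s, N i = 0 := fun i hi => by
      exact_mod_cast (sum_eq_zero_iff_of_nonneg fun j _ => Nat.cast_nonneg (N j)).1 hr.symm i hi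
    have hone (f : ι → ℝ) : ∏ i ∈ s, f i ^ N i = 1 :=
      prod_eq_one fun i hi => by rw [hN i hi, pow_zero]
    rw [hone, hone]
  set w : ι → ℝ := fun i => N i / r
  -- `z i = 0` where `w i = 0`; these points carry weight `0` in AM-GM
  set z : ι → ℝ := fun i => p i / w i
  have hw0 : ∀ i ∈ s, 0 ≤ w i := fun i _ => by positivity
  have hz0 : ∀ i ∈ s, 0 ≤ z i := fun i hi => div_nonneg (hp0 i hi) (hw0 i hi)
  have hw1 : ∑ i ∈ s, w i = 1 := by rw [← sum_div]; exact div_self hr.ne'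
  have hgeom : ∏ i ∈ s, z i ^ w i ≤ 1 := calc
    ∏ i ∈ s, z i ^ w i ≤ ∑ i ∈ s, w i * z i :=
      Real.geom_mean_le_arith_mean_weighted s w z hw0 hw1 hz0
    _ ≤ ∑ i ∈ s, p i := sum_le_sum fun i hi => by
      rcases eq_or_ne (w i) 0 with h | h
      · simp [h, hp0 i hi]
      · simp [z, mul_div_cancel₀ _ h]
    _ ≤ 1 := hp1
  have hpow : ∏ i ∈ s, z i ^ N i ≤ 1 := by
    have : ∏ i ∈ s, z i ^ N i = (∏ i ∈ s, z i ^ w i) ^ r := by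
      rw [← Real.finsetProd_rpow s _ (fun i hi => Real.rpow_nonneg (hz0 i hi) _)]
      refine prod_congr rfl fun i hi => ?_
      rw [← Real.rpow_mul (hz0 i hi), div_mul_cancel₀ _ hr.ne', Real.rpow_natCast]
    rw [this]
    exact Real.rpow_le_one (prod_nonneg fun i hi => Real.rpow_nonneg (hz0 i hi) _) hgeom hr.le
  calc ∏ i ∈ s, p i ^ N i = (∏ i ∈ s, z i ^ N i) * ∏ i ∈ s, w i ^ N i := by
        rw [← prod_mul_distrib]
        refine prod_congr rfl fun i _ => ?_
        rcases eq_or_ne (N i) 0 with h | h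
        · simp [h]
        · have : w i ≠ 0 := div_ne_zero (Nat.cast_ne_zero.2 h) hr.ne'
          rw [← mul_pow, div_mul_cancel₀ _ this]
    _ ≤ ∏ i ∈ s, w i ^ N i :=
        mul_le_of_le_one_left (prod_nonneg fun i hi => pow_nonneg (hw0 i hi) _) hpow

theorem prod_range_eq_prod_pow_transCount {A M : Type*} [Fintype A] [DecidableEq A]
    [CommMonoid M] (a : ℕ → A) (n : ℕ) (f : A → A → M) :
    ∏ i ∈ range (n - 1), f (a i) (a (i + 1)) = ∏ s, ∏ t, f s t ^ transCount a n s t := by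
  rw [← prod_fiberwise' (range (n - 1)) (fun i => (a i, a (i + 1))) (fun p => f p.1 p.2),
    ← Fintype.prod_prod_type (f := fun p : A × A => f p.1 p.2 ^ transCount a n p.1 p.2)]
  refine prod_congr rfl fun p _ => ?_
  simp [transCount, Prod.ext_iff]

theorem transCount_le_rowCount {A : Type*} [Fintype A] [DecidableEq A] (a : ℕ → A) (n : ℕ)
    (s t : A) : transCount a n s t ≤ rowCount a n s :=
  single_le_sum (fun _ _ => Nat.zero_le _) (mem_univ t)

theorem pow_eq_exp_neg_mul_log_inv {x : ℝ} (hx : 0 < x) (k : ℕ) :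
    x ^ k = Real.exp (-(k * Real.log x⁻¹)) := by
  rw [Real.log_inv, mul_neg, neg_neg, ← Real.log_pow, Real.exp_log (pow_pos hx k)]

theorem empirical_transition_matrix_MLE_general {A : Type*} [Fintype A] [DecidableEq A]
    (n : ℕ) (a : ℕ → A)
    (Mhat : A → A → ℝ)
    (hMhatEmp : ∀ s t, 0 < rowCount a n s →
      Mhat s t = (transCount a n s t : ℝ) / (rowCount a n s : ℝ)) :
    (∀ M : A → A → ℝ, (∀ s t, 0 ≤ M s t) → (∀ s, ∑ t, M s t = 1) →
      ∏ i ∈ Finset.range (n - 1), M (a i) (a (i + 1)) ≤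
        ∏ i ∈ Finset.range (n - 1), Mhat (a i) (a (i + 1))) ∧
    ∏ i ∈ Finset.range (n - 1), Mhat (a i) (a (i + 1)) =
      Real.exp (-(∑ s, ∑ t,
        if 0 < transCount a n s t then
          (transCount a n s t : ℝ) *
            Real.log ((rowCount a n s : ℝ) / (transCount a n s t : ℝ))
        else 0)) := by
  have hMhat : ∀ s t, Mhat s t ^ transCount a n s t =
      ((transCount a n s t : ℝ) / rowCount a n s) ^ transCount a n s t := by
    intro s t
    rcases (transCount a n s t).eq_zero_or_pos with h | h
    · simp [h]
    · rw [hMhatEmp s t (h.trans_le (transCount_le_rowCount a n s t))]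
  have hlik : ∏ i ∈ range (n - 1), Mhat (a i) (a (i + 1)) =
      ∏ s, ∏ t, ((transCount a n s t : ℝ) / rowCount a n s) ^ transCount a n s t := by
    simp only [prod_range_eq_prod_pow_transCount, hMhat]
  refine ⟨fun M hM0 hM1 => ?_, ?_⟩
  · rw [hlik, prod_range_eq_prod_pow_transCount]
    refine prod_le_prod (fun s _ => prod_nonneg fun t _ => pow_nonneg (hM0 s t) _)
      fun s _ => ?_
    have := prod_pow_le_prod_div_sum_pow univ (transCount a n s) (M s)
      (fun t _ => hM0 s t) (hM1 s).le
    simpa only [rowCount, Nat.cast_sum] using this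
  · rw [hlik]
    simp only [← sum_neg_distrib, Real.exp_sum]
    refine prod_congr rfl fun s _ => prod_congr rfl fun t _ => ?_
    split_ifs with h
    · have hrow := h.trans_le (transCount_le_rowCount a n s t)
      rw [pow_eq_exp_neg_mul_log_inv (by positivity), inv_div]
    · simp [Nat.eq_zero_of_not_pos h]

/-- **Maximum-likelihood characterization of the empirical transition matrix.**
For a sequence `a_1, …, a_n` over a finite set `A` (indexed here as `a 0, …, a (n-1)`),
any row-stochastic matrix `M̂` agreeing with the empirical transition frequencies
`N(s,t)/N(s)` on rows with `N(s) > 0` maximizes the conditional likelihood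
`∏ M(a_{i+1}|a_i)` among all row-stochastic matrices `M`, and its likelihood equals
`exp(−Σ_{s,t : N(s,t)>0} N(s,t)·log(N(s)/N(s,t)))`. -/
theorem empirical_transition_matrix_MLE {A : Type*} [Fintype A] [DecidableEq A]
    (n : ℕ) (hn : 2 ≤ n) (a : ℕ → A)
    (Mhat : A → A → ℝ)
    (hMhat0 : ∀ s t, 0 ≤ Mhat s t) (hMhat1 : ∀ s, ∑ t, Mhat s t = 1)
    (hMhatEmp : ∀ s t, 0 < rowCount a n s →
      Mhat s t = (transCount a n s t : ℝ) / (rowCount a n s : ℝ)) :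
    (∀ M : A → A → ℝ, (∀ s t, 0 ≤ M s t) → (∀ s, ∑ t, M s t = 1) →
      ∏ i ∈ Finset.range (n - 1), M (a i) (a (i + 1)) ≤
        ∏ i ∈ Finset.range (n - 1), Mhat (a i) (a (i + 1))) ∧
    ∏ i ∈ Finset.range (n - 1), Mhat (a i) (a (i + 1)) =
      Real.exp (-(∑ s, ∑ t,
        if 0 < transCount a n s t then
          (transCount a n s t : ℝ) *
            Real.log ((rowCount a n s : ℝ) / (transCount a n s t : ℝ))
        else 0)) :=
  empirical_transition_matrix_MLE_general n a Mhat hMhatEmp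
end

section
/- Let A be a finite set. For a finite sequence u over A of length m ≥ 2 with transition counts N_u(s,t) = #{i : u_i = s, u_{i+1} = t}, define its empirical conditional entropy per transition Ĥ(u) = (1/(m−1))·Σ_{s,t : N_u(s,t)>0} N_u(s,t)·log(N_u(s)/N_u(s,t)), where N_u(s) = Σ_t N_u(s,t), with natural logarithm, and define L(u) = sup over row-stochastic matrices M of ∏_{i=1}^{m−1} M(u_{i+1}|u_i). Let x, y be sequences over A of length N ≥ 2 and z a sequence over A of length n ≥ 2, and let x⊕z and y⊕z denote concatenations. Then the generalized log-likelihood ratio Λ := (1/n)·log( (L(x⊕z)·L(y)) / (L(x)·L(y⊕z)) ) satisfies Λ = ((N+n−1)/n)·(Ĥ(y⊕z) − Ĥ(x⊕z)) + ((N−1)/n)·(Ĥ(x) − Ĥ(y)). -/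
/-!
Conditioned on the initial symbol, the likelihood of `u` under a row-stochastic matrix `M`
is `∏ s t, M s t ^ N_u(s,t)`, so it factors over the rows. By weighted AM-GM (Gibbs'
inequality) each row factor is maximized by the empirical frequencies `N_u(s,t) / N_u(s)`,
hence `L(u) = ∏ s t, (N_u(s,t) / N_u(s)) ^ N_u(s,t) = exp (-(m - 1) Ĥ(u))`, and the identity
is the logarithm of a quotient of four such exponentials.
-/

open Finset

/-- Empirical conditional entropy per transition of a sequence `u` of length `m`:
`Ĥ(u) = (1/(m−1))·Σ_{s,t : N_u(s,t)>0} N_u(s,t)·log(N_u(s)/N_u(s,t))`. -/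
noncomputable def empCondEntropy {A : Type*} [Fintype A] [DecidableEq A]
    (u : ℕ → A) (m : ℕ) : ℝ :=
  (1 / ((m : ℝ) - 1)) * ∑ s, ∑ t,
    if 0 < transCount u m s t then
      (transCount u m s t : ℝ) *
        Real.log ((rowCount u m s : ℝ) / (transCount u m s t : ℝ))
    else 0

/-- Maximized stationary first-order Markov conditional likelihood of a sequence `u`
of length `m`: the supremum over row-stochastic matrices `M` of `∏ M(u_{i+1}|u_i)`. -/
noncomputable def maxLik {A : Type*} [Fintype A] (u : ℕ → A) (m : ℕ) : ℝ :=
  sSup {r : ℝ | ∃ M : A → A → ℝ, (∀ s t, 0 ≤ M s t) ∧ (∀ s, ∑ t, M s t = 1) ∧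
    r = ∏ i ∈ Finset.range (m - 1), M (u i) (u (i + 1))}

/-- Concatenation `x ⊕ z` of a sequence `x` of length `N` with a sequence `z`. -/
def concatSeq {A : Type*} (x : ℕ → A) (N : ℕ) (z : ℕ → A) : ℕ → A :=
  fun i => if i < N then x i else z (i - N)

theorem prod_pow_le_prod_div_sum_pow_s12 {ι : Type*} [Fintype ι] {q : ι → ℝ} (hq : ∀ i, 0 ≤ q i)
    (hq_sum : ∑ i, q i ≤ 1) (c : ι → ℕ) :
    ∏ i, q i ^ c i ≤ ∏ i, ((c i : ℝ) / (∑ j, c j : ℕ)) ^ c i := by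
  set R : ℝ := ((∑ j, c j : ℕ) : ℝ) with hR
  have hR_sum : ∑ i, (c i : ℝ) = R := by rw [hR, Nat.cast_sum]
  rcases (hR_sum ▸ sum_nonneg fun i _ => Nat.cast_nonneg (c i) : 0 ≤ R).eq_or_lt with hR0 | hR0
  · have hc : ∀ i, c i = 0 := fun i =>
      sum_eq_zero_iff.mp (by rw [← Nat.cast_eq_zero (R := ℝ), ← hR, hR0]) i (mem_univ i)
    simp [hc]
  set z : ι → ℝ := fun i => q i * R / c i
  have hz : ∀ i, 0 ≤ z i := fun i => div_nonneg (mul_nonneg (hq i) hR0.le) (Nat.cast_nonneg _)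
  have hsplit : ∀ i, q i ^ c i = z i ^ c i * ((c i : ℝ) / R) ^ c i := fun i => by
    rcases eq_or_ne (c i) 0 with hci | hci
    · simp [hci]
    · have hci' : (c i : ℝ) ≠ 0 := Nat.cast_ne_zero.mpr hci
      rw [← mul_pow]
      simp only [z]
      field_simp
  have hcz : ∑ i, (c i : ℝ) * z i ≤ R := calc
    ∑ i, (c i : ℝ) * z i ≤ ∑ i, q i * R := sum_le_sum fun i _ => by
      rcases eq_or_ne (c i) 0 with hci | hci
      · simpa [hci] using mul_nonneg (hq i) hR0.le
      · exact (mul_div_cancel₀ _ (Nat.cast_ne_zero.mpr hci)).le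
    _ = (∑ i, q i) * R := (sum_mul ..).symm
    _ ≤ R := mul_le_of_le_one_left hR0.le hq_sum
  have hz_prod : ∏ i, z i ^ c i ≤ 1 := by
    have amgm := Real.geom_mean_le_arith_mean univ (fun i => (c i : ℝ)) z
      (fun i _ => Nat.cast_nonneg _) (hR_sum ▸ hR0) (fun i _ => hz i)
    simp only [Real.rpow_natCast, hR_sum] at amgm
    have := amgm.trans ((div_le_one hR0).mpr hcz)
    rwa [Real.rpow_inv_le_iff_of_pos (prod_nonneg fun i _ => pow_nonneg (hz i) _) zero_le_one hR0,
      Real.one_rpow] at this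
  calc ∏ i, q i ^ c i = (∏ i, z i ^ c i) * ∏ i, ((c i : ℝ) / R) ^ c i := by
        rw [← prod_mul_distrib]; exact prod_congr rfl fun i _ => hsplit i
    _ ≤ ∏ i, ((c i : ℝ) / R) ^ c i :=
        mul_le_of_le_one_left (prod_nonneg fun i _ => by positivity) hz_prod

section Markov

variable {A : Type*} [Fintype A] [DecidableEq A] (u : ℕ → A) (m : ℕ)

theorem prod_transitions_eq_prod_pow_transCount (M : A → A → ℝ) :
    ∏ i ∈ range (m - 1), M (u i) (u (i + 1)) = ∏ s, ∏ t, M s t ^ transCount u m s t := by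
  rw [← prod_fiberwise (range (m - 1)) (fun i => (u i, u (i + 1))), Fintype.prod_prod_type]
  refine prod_congr rfl fun s _ => prod_congr rfl fun t _ => ?_
  simp only [Prod.mk.injEq]
  rw [prod_congr rfl fun i hi => by rw [(mem_filter.mp hi).2.1, (mem_filter.mp hi).2.2],
    prod_const, transCount]

theorem rowCount_pos_of_transCount_pos {s t : A} (h : 0 < transCount u m s t) :
    0 < rowCount u m s :=
  h.trans_le (single_le_sum (fun _ _ => Nat.zero_le _) (mem_univ t))

/-- A row `s` that `u` never leaves is set to the point mass at `s`, only to make the matrix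
stochastic. -/
noncomputable def empiricalTransMatrix (s t : A) : ℝ :=
  if rowCount u m s = 0 then if s = t then 1 else 0
  else (transCount u m s t : ℝ) / rowCount u m s

theorem empiricalTransMatrix_nonneg (s t : A) : 0 ≤ empiricalTransMatrix u m s t := by
  unfold empiricalTransMatrix
  split_ifs <;> positivity

theorem sum_empiricalTransMatrix (s : A) : ∑ t, empiricalTransMatrix u m s t = 1 := by
  unfold empiricalTransMatrix
  split_ifs with hs
  · exact Fintype.sum_ite_eq s fun _ => 1
  · rw [← sum_div, div_eq_one_iff_eq (by exact_mod_cast hs), rowCount, Nat.cast_sum]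

theorem maxLik_eq_prod_pow :
    maxLik u m = ∏ s, ∏ t, ((transCount u m s t : ℝ) / rowCount u m s) ^ transCount u m s t := by
  refine IsGreatest.csSup_eq ⟨⟨empiricalTransMatrix u m, empiricalTransMatrix_nonneg u m,
    sum_empiricalTransMatrix u m, ?_⟩, ?_⟩
  · rw [prod_transitions_eq_prod_pow_transCount]
    refine prod_congr rfl fun s _ => prod_congr rfl fun t _ => ?_
    rcases (transCount u m s t).eq_zero_or_pos with h | h
    · simp [h]
    · rw [empiricalTransMatrix, if_neg (rowCount_pos_of_transCount_pos u m h).ne']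
  · rintro r ⟨M, hM_nonneg, hM_sum, rfl⟩
    rw [prod_transitions_eq_prod_pow_transCount]
    exact prod_le_prod (fun s _ => prod_nonneg fun t _ => pow_nonneg (hM_nonneg s t) _)
      fun s _ => prod_pow_le_prod_div_sum_pow_s12 (hM_nonneg s) (hM_sum s).le _

theorem sub_one_mul_empCondEntropy :
    ((m : ℝ) - 1) * empCondEntropy u m =
      ∑ s, ∑ t, (transCount u m s t : ℝ) * Real.log (rowCount u m s / transCount u m s t) := by
  rcases eq_or_ne m 1 with rfl | hm
  · simp [transCount]
  rw [empCondEntropy, ← mul_assoc, mul_one_div_cancel (sub_ne_zero.mpr (by exact_mod_cast hm)),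
    one_mul]
  refine sum_congr rfl fun s _ => sum_congr rfl fun t _ => ?_
  split_ifs with h
  · rfl
  · simp [Nat.eq_zero_of_not_pos h]

theorem maxLik_eq_exp : maxLik u m = Real.exp (-(((m : ℝ) - 1) * empCondEntropy u m)) := by
  rw [maxLik_eq_prod_pow, sub_one_mul_empCondEntropy]
  simp only [← sum_neg_distrib, Real.exp_sum]
  refine prod_congr rfl fun s _ => prod_congr rfl fun t _ => ?_
  rcases (transCount u m s t).eq_zero_or_pos with h | h
  · simp [h]
  have hrow := rowCount_pos_of_transCount_pos u m h
  rw [← mul_neg, ← Real.log_inv, inv_div, Real.exp_nat_mul, Real.exp_log (by positivity)]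

end Markov

theorem gllr_entropy_identity_general {A : Type*} [Fintype A] [DecidableEq A]
    (N n : ℕ) (x y z : ℕ → A) :
    (1 / (n : ℝ)) * Real.log
        ((maxLik (concatSeq x N z) (N + n) * maxLik y N) /
          (maxLik x N * maxLik (concatSeq y N z) (N + n))) =
      (((N : ℝ) + (n : ℝ) - 1) / (n : ℝ)) *
          (empCondEntropy (concatSeq y N z) (N + n) -
            empCondEntropy (concatSeq x N z) (N + n)) +
        (((N : ℝ) - 1) / (n : ℝ)) * (empCondEntropy x N - empCondEntropy y N) := by
  simp only [maxLik_eq_exp, ← Real.exp_add, ← Real.exp_sub, Real.log_exp]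
  push_cast
  ring

/-- **ΔGJS as a generalized log-likelihood ratio.** With `x, y` of length `N ≥ 2` and
`z` of length `n ≥ 2`, the generalized log-likelihood ratio
`Λ = (1/n)·log((L(x⊕z)·L(y))/(L(x)·L(y⊕z)))` equals
`((N+n−1)/n)·(Ĥ(y⊕z) − Ĥ(x⊕z)) + ((N−1)/n)·(Ĥ(x) − Ĥ(y))`. -/
theorem gllr_entropy_identity {A : Type*} [Fintype A] [DecidableEq A]
    (N n : ℕ) (hN : 2 ≤ N) (hn : 2 ≤ n) (x y z : ℕ → A) :
    (1 / (n : ℝ)) * Real.log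
        ((maxLik (concatSeq x N z) (N + n) * maxLik y N) /
          (maxLik x N * maxLik (concatSeq y N z) (N + n))) =
      (((N : ℝ) + (n : ℝ) - 1) / (n : ℝ)) *
          (empCondEntropy (concatSeq y N z) (N + n) -
            empCondEntropy (concatSeq x N z) (N + n)) +
        (((N : ℝ) - 1) / (n : ℝ)) * (empCondEntropy x N - empCondEntropy y N) :=
  gllr_entropy_identity_general N n x y z
end
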